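/- Uniform moment bounds for the rescaled measures (Lemma 3.2, labeled Le21): Fix α ∈ (0,2) and let ν be a Borel probability measure on ℝ^d with K := sup_{λ≥1} [ λ^{α−2} ∫_{|z|≤λ} |z|² ν(dz) + λ^α ν({|z| > λ}) ] < ∞. For ε ∈ (0,1] define ν_ε := ε^{−1} · (image measure of ν under z ↦ ε^{1/α} z). Then for every β ∈ [0,α), sup_{λ≥1, ε∈(0,1]} [ λ^{α−2} ∫_{|z|≤λ} |z|² ν_ε(dz) + λ^{α−β} ∫_{|z|>λ} |z|^β ν_ε(dz) ] < ∞ (with a bound depending only on α, β and K). -/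
import Mathlib


open MeasureTheory
open scoped ENNReal

noncomputable section

/-- The rescaled measure `ν_ε := ε⁻¹ · (image of ν under z ↦ ε^{1/α} z)`. -/
def rescaledMeasure {d : ℕ} (ν : Measure (EuclideanSpace ℝ (Fin d))) (α ε : ℝ) :
    Measure (EuclideanSpace ℝ (Fin d)) :=
  (ENNReal.ofReal ε)⁻¹ • ν.map (fun z => ε ^ (1 / α) • z)

private lemma exists_dyadic {t : ℝ} (ht : 1 < t) :
    ∃ k : ℕ, (2:ℝ) ^ k < t ∧ t ≤ 2 ^ (k + 1) := by
  have h : ∃ n : ℕ, t ≤ 2 ^ (n + 1) := by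
    obtain ⟨n, hn⟩ := pow_unbounded_of_one_lt t (by norm_num : (1:ℝ) < 2)
    exact ⟨n, hn.le.trans (pow_le_pow_right₀ (by norm_num) (Nat.le_succ n))⟩
  classical
  refine ⟨Nat.find h, ?_, Nat.find_spec h⟩
  rcases hk : Nat.find h with _ | j
  · simpa using ht
  · have hmin := Nat.find_min h (by omega : j < Nat.find h)
    push_neg at hmin
    simpa using hmin

/-- **Lemma 3.2 (Le21): uniform moment bounds for the rescaled measures.**
If `sup_{λ≥1} [λ^{α−2} ∫_{|z|≤λ} |z|² ν(dz) + λ^α ν(|z|>λ)] ≤ K`, then for every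
`β ∈ [0,α)` there is a bound `K'` (depending only on `α`, `β`, `K`) such that
`λ^{α−2} ∫_{|z|≤λ} |z|² ν_ε(dz) + λ^{α−β} ∫_{|z|>λ} |z|^β ν_ε(dz) ≤ K'`
uniformly in `λ ≥ 1` and `ε ∈ (0,1]`. -/
theorem rescaled_measure_uniform_moments
    (α β K : ℝ) (hα : α ∈ Set.Ioo (0:ℝ) 2) (hβ : β ∈ Set.Ico (0:ℝ) α) :
    ∃ K' : ℝ,
      ∀ (d : ℕ) (ν : Measure (EuclideanSpace ℝ (Fin d))), IsProbabilityMeasure ν →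
        (∀ lam : ℝ, 1 ≤ lam →
          ENNReal.ofReal (lam ^ (α - 2)) *
              ∫⁻ z in {z : EuclideanSpace ℝ (Fin d) | ‖z‖ ≤ lam},
                ENNReal.ofReal (‖z‖ ^ 2) ∂ν
            + ENNReal.ofReal (lam ^ α) * ν {z : EuclideanSpace ℝ (Fin d) | lam < ‖z‖}
            ≤ ENNReal.ofReal K) →
        ∀ lam : ℝ, 1 ≤ lam → ∀ ε ∈ Set.Ioc (0:ℝ) 1,
          ENNReal.ofReal (lam ^ (α - 2)) *
              ∫⁻ z in {z : EuclideanSpace ℝ (Fin d) | ‖z‖ ≤ lam},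
                ENNReal.ofReal (‖z‖ ^ 2) ∂(rescaledMeasure ν α ε)
            + ENNReal.ofReal (lam ^ (α - β)) *
              ∫⁻ z in {z : EuclideanSpace ℝ (Fin d) | lam < ‖z‖},
                ENNReal.ofReal (‖z‖ ^ β) ∂(rescaledMeasure ν α ε)
            ≤ ENNReal.ofReal K' := by
  obtain ⟨hα0, hα2⟩ := hα
  obtain ⟨hβ0, hβα⟩ := hβ
  set K₀ : ℝ := max K 0 with hK₀def
  have hK₀ : 0 ≤ K₀ := le_max_right _ _
  set r : ℝ := (2:ℝ) ^ (β - α) with hrdef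
  have hr0 : 0 < r := Real.rpow_pos_of_pos two_pos _
  have hr1 : r < 1 := Real.rpow_lt_one_of_one_lt_of_neg one_lt_two (by linarith)
  have h2β : (0:ℝ) ≤ (2:ℝ) ^ β := (Real.rpow_pos_of_pos two_pos β).le
  have hC2 : (0:ℝ) ≤ K₀ * 2 ^ β * (1 - r)⁻¹ :=
    mul_nonneg (mul_nonneg hK₀ h2β) (inv_nonneg.2 (by linarith))
  refine ⟨K₀ + K₀ * 2 ^ β * (1 - r)⁻¹, ?_⟩
  intro d ν _hν hK lam hlam ε hε
  obtain ⟨hε0, hε1⟩ := hε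
  have hlam0 : (0:ℝ) < lam := lt_of_lt_of_le one_pos hlam
  -- upgraded hypothesis with K₀
  have hK' : ∀ l : ℝ, 1 ≤ l →
      ENNReal.ofReal (l ^ (α - 2)) *
          ∫⁻ z in {z : EuclideanSpace ℝ (Fin d) | ‖z‖ ≤ l},
            ENNReal.ofReal (‖z‖ ^ 2) ∂ν
        + ENNReal.ofReal (l ^ α) * ν {z : EuclideanSpace ℝ (Fin d) | l < ‖z‖}
        ≤ ENNReal.ofReal K₀ :=
    fun l hl => (hK l hl).trans (ENNReal.ofReal_le_ofReal (le_max_left _ _))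
  -- second moment bound
  have mom2 : ∀ l : ℝ, 1 ≤ l →
      ENNReal.ofReal (l ^ (α - 2)) *
          ∫⁻ z in {z : EuclideanSpace ℝ (Fin d) | ‖z‖ ≤ l},
            ENNReal.ofReal (‖z‖ ^ 2) ∂ν ≤ ENNReal.ofReal K₀ :=
    fun l hl => le_trans (self_le_add_right _ _) (hK' l hl)
  -- tail probability bound
  have tail : ∀ l : ℝ, 1 ≤ l →
      ν {z : EuclideanSpace ℝ (Fin d) | l < ‖z‖} ≤ ENNReal.ofReal (K₀ * l ^ (-α)) := by
    intro l hl
    have hl0 : (0:ℝ) < l := lt_of_lt_of_le one_pos hl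
    have h1 : ENNReal.ofReal (l ^ (-α)) * ENNReal.ofReal (l ^ α) = 1 := by
      rw [← ENNReal.ofReal_mul (Real.rpow_nonneg hl0.le _), ← Real.rpow_add hl0,
        show -α + α = 0 by ring, Real.rpow_zero, ENNReal.ofReal_one]
    calc ν {z : EuclideanSpace ℝ (Fin d) | l < ‖z‖}
        = ENNReal.ofReal (l ^ (-α)) *
            (ENNReal.ofReal (l ^ α) * ν {z : EuclideanSpace ℝ (Fin d) | l < ‖z‖}) := by
          rw [← mul_assoc, h1, one_mul]
      _ ≤ ENNReal.ofReal (l ^ (-α)) * ENNReal.ofReal K₀ :=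
          mul_le_mul_right (le_trans (le_add_self) (hK' l hl)) _
      _ = ENNReal.ofReal (K₀ * l ^ (-α)) := by
          rw [← ENNReal.ofReal_mul (Real.rpow_nonneg hl0.le _), mul_comm]
  -- dyadic tail-moment bound
  have tailβ : ∀ l : ℝ, 1 ≤ l →
      ENNReal.ofReal (l ^ (α - β)) *
          ∫⁻ z in {z : EuclideanSpace ℝ (Fin d) | l < ‖z‖},
            ENNReal.ofReal (‖z‖ ^ β) ∂ν
        ≤ ENNReal.ofReal (K₀ * 2 ^ β * (1 - r)⁻¹) := by
    intro l hl
    have hl0 : (0:ℝ) < l := lt_of_lt_of_le one_pos hl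
    have hC0 : (0:ℝ) ≤ K₀ * 2 ^ β * l ^ (β - α) :=
      mul_nonneg (mul_nonneg hK₀ h2β) (Real.rpow_nonneg hl0.le _)
    have hcover : {z : EuclideanSpace ℝ (Fin d) | l < ‖z‖} ⊆
        ⋃ k : ℕ, {z : EuclideanSpace ℝ (Fin d) |
          (2:ℝ) ^ k * l < ‖z‖ ∧ ‖z‖ ≤ 2 ^ (k + 1) * l} := by
      intro z hz
      have ht : 1 < ‖z‖ / l := (one_lt_div hl0).2 hz
      obtain ⟨k, h1, h2⟩ := exists_dyadic ht
      exact Set.mem_iUnion.2 ⟨k, (lt_div_iff₀ hl0).1 h1, (div_le_iff₀ hl0).1 h2⟩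
    have step : ∀ k : ℕ,
        ∫⁻ z in {z : EuclideanSpace ℝ (Fin d) |
            (2:ℝ) ^ k * l < ‖z‖ ∧ ‖z‖ ≤ 2 ^ (k + 1) * l},
          ENNReal.ofReal (‖z‖ ^ β) ∂ν
          ≤ ENNReal.ofReal ((K₀ * 2 ^ β * l ^ (β - α)) * r ^ k) := by
      intro k
      have ht0 : (0:ℝ) < 2 ^ k * l := by positivity
      have hkl : (1:ℝ) ≤ 2 ^ k * l :=
        one_le_mul_of_one_le_of_one_le (one_le_pow₀ one_le_two) hl
      calc ∫⁻ z in {z : EuclideanSpace ℝ (Fin d) |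
              (2:ℝ) ^ k * l < ‖z‖ ∧ ‖z‖ ≤ 2 ^ (k + 1) * l},
            ENNReal.ofReal (‖z‖ ^ β) ∂ν
          ≤ ∫⁻ _z in {z : EuclideanSpace ℝ (Fin d) |
              (2:ℝ) ^ k * l < ‖z‖ ∧ ‖z‖ ≤ 2 ^ (k + 1) * l},
            ENNReal.ofReal (((2:ℝ) ^ (k + 1) * l) ^ β) ∂ν := by
            refine setLIntegral_mono measurable_const (fun z hz => ?_)
            exact ENNReal.ofReal_le_ofReal
              (Real.rpow_le_rpow (norm_nonneg z) hz.2 hβ0)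
        _ = ENNReal.ofReal (((2:ℝ) ^ (k + 1) * l) ^ β) *
              ν {z : EuclideanSpace ℝ (Fin d) |
                (2:ℝ) ^ k * l < ‖z‖ ∧ ‖z‖ ≤ 2 ^ (k + 1) * l} := setLIntegral_const _ _
        _ ≤ ENNReal.ofReal (((2:ℝ) ^ (k + 1) * l) ^ β) *
              ν {z : EuclideanSpace ℝ (Fin d) | (2:ℝ) ^ k * l < ‖z‖} :=
            mul_le_mul_right (measure_mono (fun z hz => hz.1)) _
        _ ≤ ENNReal.ofReal (((2:ℝ) ^ (k + 1) * l) ^ β) *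
              ENNReal.ofReal (K₀ * ((2:ℝ) ^ k * l) ^ (-α)) :=
            mul_le_mul_right (tail _ hkl) _
        _ = ENNReal.ofReal ((K₀ * 2 ^ β * l ^ (β - α)) * r ^ k) := by
            rw [← ENNReal.ofReal_mul (Real.rpow_nonneg (by positivity) _)]
            congr 1
            have econst : ((2:ℝ) ^ (k + 1) * l) ^ β = 2 ^ β * ((2:ℝ) ^ k * l) ^ β := by
              rw [pow_succ, mul_comm ((2:ℝ) ^ k) 2, mul_assoc,
                Real.mul_rpow (by norm_num) ht0.le]
            have e1 : ((2:ℝ) ^ k * l) ^ β * ((2:ℝ) ^ k * l) ^ (-α)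
                = ((2:ℝ) ^ k * l) ^ (β - α) := by
              rw [← Real.rpow_add ht0]; ring_nf
            have e2 : ((2:ℝ) ^ k * l) ^ (β - α) = r ^ k * l ^ (β - α) := by
              rw [Real.mul_rpow (by positivity) hl0.le, hrdef,
                ← Real.rpow_natCast ((2:ℝ) ^ (β - α)) k,
                ← Real.rpow_natCast (2:ℝ) k,
                ← Real.rpow_mul (by norm_num : (0:ℝ) ≤ 2),
                ← Real.rpow_mul (by norm_num : (0:ℝ) ≤ 2),
                mul_comm (β - α) (k:ℝ)]
            calc ((2:ℝ) ^ (k + 1) * l) ^ β * (K₀ * ((2:ℝ) ^ k * l) ^ (-α))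
                = K₀ * 2 ^ β *
                    (((2:ℝ) ^ k * l) ^ β * ((2:ℝ) ^ k * l) ^ (-α)) := by
                  rw [econst]; ring
              _ = K₀ * 2 ^ β * (r ^ k * l ^ (β - α)) := by rw [e1, e2]
              _ = (K₀ * 2 ^ β * l ^ (β - α)) * r ^ k := by ring
    calc ENNReal.ofReal (l ^ (α - β)) *
          ∫⁻ z in {z : EuclideanSpace ℝ (Fin d) | l < ‖z‖},
            ENNReal.ofReal (‖z‖ ^ β) ∂ν
        ≤ ENNReal.ofReal (l ^ (α - β)) *
            ∑' k : ℕ, ENNReal.ofReal ((K₀ * 2 ^ β * l ^ (β - α)) * r ^ k) := by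
          refine mul_le_mul_right ?_ _
          exact le_trans (lintegral_mono_set hcover)
            (le_trans (lintegral_iUnion_le _ _) (ENNReal.tsum_le_tsum step))
      _ = ENNReal.ofReal (l ^ (α - β)) *
            (ENNReal.ofReal (K₀ * 2 ^ β * l ^ (β - α)) * (1 - ENNReal.ofReal r)⁻¹) := by
          have h : ∀ k : ℕ, ENNReal.ofReal ((K₀ * 2 ^ β * l ^ (β - α)) * r ^ k)
              = ENNReal.ofReal (K₀ * 2 ^ β * l ^ (β - α)) * (ENNReal.ofReal r) ^ k :=
            fun k => by rw [ENNReal.ofReal_mul hC0, ENNReal.ofReal_pow hr0.le]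
          simp_rw [h]
          rw [ENNReal.tsum_mul_left, ENNReal.tsum_geometric]
      _ = ENNReal.ofReal (K₀ * 2 ^ β * (1 - r)⁻¹) := by
          rw [show (1:ℝ≥0∞) - ENNReal.ofReal r = ENNReal.ofReal (1 - r) by
              rw [ENNReal.ofReal_sub 1 hr0.le, ENNReal.ofReal_one],
            ← ENNReal.ofReal_inv_of_pos (by linarith : (0:ℝ) < 1 - r),
            ← ENNReal.ofReal_mul hC0,
            ← ENNReal.ofReal_mul (Real.rpow_nonneg hl0.le _)]
          congr 1
          have hone : l ^ (α - β) * l ^ (β - α) = 1 := by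
            rw [← Real.rpow_add hl0, show α - β + (β - α) = 0 by ring, Real.rpow_zero]
          calc l ^ (α - β) * (K₀ * 2 ^ β * l ^ (β - α) * (1 - r)⁻¹)
              = (l ^ (α - β) * l ^ (β - α)) * (K₀ * 2 ^ β * (1 - r)⁻¹) := by ring
            _ = K₀ * 2 ^ β * (1 - r)⁻¹ := by rw [hone, one_mul]
  -- change of variables for the rescaled measure
  simp only [rescaledMeasure, Measure.restrict_smul, lintegral_smul_measure]
  set c : ℝ := ε ^ (1 / α) with hcdef
  have hc0 : (0:ℝ) < c := Real.rpow_pos_of_pos hε0 _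
  have hc1 : c ≤ 1 := Real.rpow_le_one hε0.le hε1 (by positivity)
  set μ : ℝ := lam / c with hμdef
  have hμ1 : (1:ℝ) ≤ μ := (le_div_iff₀ hc0).2 (by rw [one_mul]; exact hc1.trans hlam)
  have hT : Measurable fun z : EuclideanSpace ℝ (Fin d) => c • z :=
    measurable_id.const_smul c
  have hpre1 : (fun z : EuclideanSpace ℝ (Fin d) => c • z) ⁻¹'
      {z : EuclideanSpace ℝ (Fin d) | ‖z‖ ≤ lam}
      = {z : EuclideanSpace ℝ (Fin d) | ‖z‖ ≤ μ} := by
    ext z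
    simp only [Set.mem_preimage, Set.mem_setOf_eq, norm_smul, Real.norm_eq_abs,
      abs_of_pos hc0, hμdef, le_div_iff₀ hc0]
    rw [mul_comm]
  have hpre2 : (fun z : EuclideanSpace ℝ (Fin d) => c • z) ⁻¹'
      {z : EuclideanSpace ℝ (Fin d) | lam < ‖z‖}
      = {z : EuclideanSpace ℝ (Fin d) | μ < ‖z‖} := by
    ext z
    simp only [Set.mem_preimage, Set.mem_setOf_eq, norm_smul, Real.norm_eq_abs,
      abs_of_pos hc0, hμdef, div_lt_iff₀ hc0]
    rw [mul_comm]
  have hf2 : Measurable fun z : EuclideanSpace ℝ (Fin d) => ENNReal.ofReal (‖z‖ ^ 2) :=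
    (measurable_norm.pow_const 2).ennreal_ofReal
  have hfβ : Measurable fun z : EuclideanSpace ℝ (Fin d) => ENNReal.ofReal (‖z‖ ^ β) :=
    ((Real.continuous_rpow_const hβ0).comp continuous_norm).measurable.ennreal_ofReal
  rw [setLIntegral_map (measurableSet_le measurable_norm measurable_const) hf2 hT,
    setLIntegral_map (measurableSet_lt measurable_const measurable_norm) hfβ hT,
    hpre1, hpre2]
  simp only [norm_smul, Real.norm_eq_abs, abs_of_pos hc0, mul_pow,
    Real.mul_rpow hc0.le (norm_nonneg _),
    ENNReal.ofReal_mul (pow_nonneg hc0.le 2),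
    ENNReal.ofReal_mul (Real.rpow_nonneg hc0.le β),
    lintegral_const_mul' _ _ ENNReal.ofReal_ne_top]
  -- scaling identity for the constants
  have scale : ∀ γ : ℝ, lam ^ (α - γ) * (ε⁻¹ * c ^ γ) = μ ^ (α - γ) := by
    intro γ
    have hcγ : c ^ (α - γ) * c ^ γ = ε := by
      rw [← Real.rpow_add hc0, sub_add_cancel, hcdef, ← Real.rpow_mul hε0.le,
        one_div, inv_mul_cancel₀ (ne_of_gt hα0), Real.rpow_one]
    have h2 : ε⁻¹ * c ^ γ = (c ^ (α - γ))⁻¹ := by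
      rw [← hcγ, mul_inv, mul_assoc,
        inv_mul_cancel₀ (ne_of_gt (Real.rpow_pos_of_pos hc0 γ)), mul_one]
    rw [h2, hμdef, Real.div_rpow hlam0.le hc0.le, div_eq_mul_inv]
  have const1 : ENNReal.ofReal (lam ^ (α - 2)) *
      ((ENNReal.ofReal ε)⁻¹ * ENNReal.ofReal (c ^ 2)) = ENNReal.ofReal (μ ^ (α - 2)) := by
    rw [← ENNReal.ofReal_inv_of_pos hε0,
      ← ENNReal.ofReal_mul (inv_nonneg.2 hε0.le),
      ← ENNReal.ofReal_mul (Real.rpow_nonneg hlam0.le _)]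
    congr 1
    have : (c:ℝ) ^ (2:ℕ) = c ^ ((2:ℕ):ℝ) := (Real.rpow_natCast c 2).symm
    rw [this]
    push_cast
    exact scale 2
  have const2 : ENNReal.ofReal (lam ^ (α - β)) *
      ((ENNReal.ofReal ε)⁻¹ * ENNReal.ofReal (c ^ β)) = ENNReal.ofReal (μ ^ (α - β)) := by
    rw [← ENNReal.ofReal_inv_of_pos hε0,
      ← ENNReal.ofReal_mul (inv_nonneg.2 hε0.le),
      ← ENNReal.ofReal_mul (Real.rpow_nonneg hlam0.le _)]
    congr 1
    exact scale β
  calc ENNReal.ofReal (lam ^ (α - 2)) *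
        ((ENNReal.ofReal ε)⁻¹ * (ENNReal.ofReal (c ^ 2) *
          ∫⁻ z in {z : EuclideanSpace ℝ (Fin d) | ‖z‖ ≤ μ},
            ENNReal.ofReal (‖z‖ ^ 2) ∂ν))
      + ENNReal.ofReal (lam ^ (α - β)) *
        ((ENNReal.ofReal ε)⁻¹ * (ENNReal.ofReal (c ^ β) *
          ∫⁻ z in {z : EuclideanSpace ℝ (Fin d) | μ < ‖z‖},
            ENNReal.ofReal (‖z‖ ^ β) ∂ν))
      = (ENNReal.ofReal (lam ^ (α - 2)) * ((ENNReal.ofReal ε)⁻¹ * ENNReal.ofReal (c ^ 2))) *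
          (∫⁻ z in {z : EuclideanSpace ℝ (Fin d) | ‖z‖ ≤ μ},
            ENNReal.ofReal (‖z‖ ^ 2) ∂ν)
        + (ENNReal.ofReal (lam ^ (α - β)) * ((ENNReal.ofReal ε)⁻¹ * ENNReal.ofReal (c ^ β))) *
          (∫⁻ z in {z : EuclideanSpace ℝ (Fin d) | μ < ‖z‖},
            ENNReal.ofReal (‖z‖ ^ β) ∂ν) := by ring
    _ = ENNReal.ofReal (μ ^ (α - 2)) *
          (∫⁻ z in {z : EuclideanSpace ℝ (Fin d) | ‖z‖ ≤ μ},
            ENNReal.ofReal (‖z‖ ^ 2) ∂ν)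
        + ENNReal.ofReal (μ ^ (α - β)) *
          (∫⁻ z in {z : EuclideanSpace ℝ (Fin d) | μ < ‖z‖},
            ENNReal.ofReal (‖z‖ ^ β) ∂ν) := by rw [const1, const2]
    _ ≤ ENNReal.ofReal K₀ + ENNReal.ofReal (K₀ * 2 ^ β * (1 - r)⁻¹) :=
        add_le_add (mom2 μ hμ1) (tailβ μ hμ1)
    _ = ENNReal.ofReal (K₀ + K₀ * 2 ^ β * (1 - r)⁻¹) := (ENNReal.ofReal_add hK₀ hC2).symm
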